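/- Let v ∈ W_p and let t ∈ W_p be any reflection (so t = s_{α,mp} for some α ∈ Φ⁺ and m ∈ ℤ). If tv·μ ≺ v·μ, then tv·λ ≺ v·λ. -/

import Mathlib

noncomputable section

/-- The real vector space `X ⊗ ℝ`, where `X` is a free abelian group of rank `r`. -/
abbrev Vr (r : ℕ) := Fin r → ℝ

/-- The lattice `X` (identified with `ℤ^r`); its dual lattice `Y` is identified with
the same coordinate lattice via the standard perfect pairing. -/
abbrev Lr (r : ℕ) := Fin r → ℤ

/-- The embedding `X → X ⊗ ℝ`. -/
def toV {r : ℕ} (x : Lr r) : Vr r := fun i => (x i : ℝ)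

/-- The perfect pairing `⟨·,·⟩ : X × Y → ℤ`. -/
def pairZ {r : ℕ} (x y : Lr r) : ℤ := ∑ i, x i * y i

/-- The real extension of the pairing to `(X ⊗ ℝ) × Y → ℝ`. -/
def pairR {r : ℕ} (v : Vr r) (y : Lr r) : ℝ := ∑ i, v i * (y i : ℝ)

/-- The subgroup `ℤI` of `X` generated by a subset `I ⊆ X`. -/
def ZI {r : ℕ} (I : Finset (Lr r)) : AddSubgroup (Lr r) :=
  AddSubgroup.closure (I : Set (Lr r))

/-- The data of a reduced crystallographic root system `Φ ⊆ X` with a fixed positive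
system `Φ⁺`, simple roots `Φ_s`, coroots `α∨ ∈ Y`, a prime `p`, and the half-sum
`ρ ∈ X` of the positive roots. -/
structure ARDatum (r : ℕ) where
  Φ : Finset (Lr r)
  pos : Finset (Lr r)
  simples : Finset (Lr r)
  coroot : Lr r → Lr r
  p : ℕ
  ρ : Lr r
  hp : p.Prime
  root_ne_zero : ∀ α ∈ Φ, α ≠ 0
  pos_sub : pos ⊆ Φ
  simples_sub : simples ⊆ pos
  pos_or_neg : ∀ α ∈ Φ, α ∈ pos ∨ -α ∈ pos
  not_pos_and_neg : ∀ α ∈ pos, -α ∉ pos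
  neg_mem : ∀ α ∈ Φ, -α ∈ Φ
  root_coroot_two : ∀ α ∈ Φ, pairZ α (coroot α) = 2
  reflect_root_mem : ∀ α ∈ Φ, ∀ β ∈ Φ, β - pairZ β (coroot α) • α ∈ Φ
  reflect_coroot_mem : ∀ α ∈ Φ, ∀ β ∈ Φ,
    coroot β - pairZ α (coroot β) • coroot α ∈ coroot '' (Φ : Set (Lr r))
  reduced : ∀ α ∈ Φ, ∀ c : ℤ, c • α ∈ Φ → c = 1 ∨ c = -1
  pos_sum_simples : ∀ β ∈ pos, ∃ c : Lr r → ℕ, β = ∑ α ∈ simples, (c α : ℤ) • α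
  two_rho : (2 : ℤ) • ρ = ∑ α ∈ pos, α

namespace ARDatum

/-- The group of affine transformations of `X ⊗ ℝ`. -/
abbrev G (r : ℕ) := (Vr r) ≃ᵃ[ℝ] (Vr r)

variable {r : ℕ} (D : ARDatum r)

/-- `g` is the affine reflection `s_{α,mp} : v ↦ v − (⟨v,α∨⟩ − mp)·α`. -/
def IsRefl (α : Lr r) (m : ℤ) (g : G r) : Prop :=
  ∀ v : Vr r, g v = v - (pairR v (D.coroot α) - (m : ℝ) * (D.p : ℝ)) • toV α

/-- `g` is the linear reflection `s_α : v ↦ v − ⟨v,α∨⟩·α`. -/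
def IsLinRefl (α : Lr r) (g : G r) : Prop := D.IsRefl α 0 g

/-- `g` is the translation `t_{α,mp} : v ↦ v + mp·α`. -/
def IsTransl (α : Lr r) (m : ℤ) (g : G r) : Prop :=
  ∀ v : Vr r, g v = v + ((m : ℝ) * (D.p : ℝ)) • toV α

/-- The affine Weyl group `W_p`, generated by the `s_α` and the `t_{α,mp}`
for `α ∈ Φ⁺`, `m ∈ ℤ`. -/
def Wp : Subgroup (G r) :=
  Subgroup.closure ({g | ∃ α ∈ D.pos, D.IsLinRefl α g} ∪
    {g | ∃ α ∈ D.pos, ∃ m : ℤ, D.IsTransl α m g})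

/-- The finite Weyl group `W`, generated by the `s_α` for `α ∈ Φ⁺`. -/
def W : Subgroup (G r) :=
  Subgroup.closure {g | ∃ α ∈ D.pos, D.IsLinRefl α g}

/-- The subgroup `W_{I,p}` generated by the `s_α` and `t_{α,mp}` for `α ∈ I`. -/
def WIp (I : Finset (Lr r)) : Subgroup (G r) :=
  Subgroup.closure ({g | ∃ α ∈ I, D.IsLinRefl α g} ∪
    {g | ∃ α ∈ I, ∃ m : ℤ, D.IsTransl α m g})

/-- The subgroup `W_I` of `W` generated by the `s_α` for `α ∈ I`. -/
def WI (I : Finset (Lr r)) : Subgroup (G r) :=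
  Subgroup.closure {g | ∃ α ∈ I, D.IsLinRefl α g}

/-- `g` is a reflection (the reflections of `W_p` are exactly the `s_{α,mp}`). -/
def IsReflection (g : G r) : Prop := ∃ α ∈ D.pos, ∃ m : ℤ, D.IsRefl α m g

/-- The dot action `w·v := w(v+ρ) − ρ`. -/
def dot (g : G r) (v : Vr r) : Vr r := g (v + toV D.ρ) - toV D.ρ

/-- The hyperplane `H_{α,n} = {v : ⟨v+ρ,α∨⟩ = np}`. -/
def Hyp (α : Lr r) (n : ℤ) : Set (Vr r) :=
  {v | pairR (v + toV D.ρ) (D.coroot α) = (n : ℝ) * (D.p : ℝ)}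

/-- The complement of the union of all the hyperplanes `H_{α,n}`. -/
def Reg : Set (Vr r) :=
  {v | ∀ α ∈ D.pos, ∀ n : ℤ, pairR (v + toV D.ρ) (D.coroot α) ≠ (n : ℝ) * (D.p : ℝ)}

/-- The alcove containing `v` (the connected component of `v` in the complement of
the hyperplanes). -/
def alcoveOf (v : Vr r) : Set (Vr r) := connectedComponentIn D.Reg v

/-- `H_{α,n}` contains a wall of `A`, i.e. the interior of `closure A ∩ H_{α,n}`
inside the hyperplane `H_{α,n}` is nonempty. -/
def HasWall (A : Set (Vr r)) (α : Lr r) (n : ℤ) : Prop :=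
  ∃ x ∈ closure A ∩ D.Hyp α n, ∃ ε > 0,
    ∀ y ∈ D.Hyp α n, dist y x < ε → y ∈ closure A

/-- The fundamental alcove `C`. -/
def FundC : Set (Vr r) :=
  {v | ∀ α ∈ D.pos, 0 < pairR (v + toV D.ρ) (D.coroot α) ∧
    pairR (v + toV D.ρ) (D.coroot α) < (D.p : ℝ)}

/-- The closure `C̄` of the fundamental alcove. -/
def FundCBar : Set (Vr r) :=
  {v | ∀ α ∈ D.pos, 0 ≤ pairR (v + toV D.ρ) (D.coroot α) ∧
    pairR (v + toV D.ρ) (D.coroot α) ≤ (D.p : ℝ)}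

/-- The region `C_I`. -/
def CI (I : Finset (Lr r)) : Set (Vr r) :=
  {v | ∀ α ∈ D.pos, α ∈ ZI I → 0 < pairR (v + toV D.ρ) (D.coroot α) ∧
    pairR (v + toV D.ρ) (D.coroot α) < (D.p : ℝ)}

/-- The region `C̄_I`. -/
def CIBar (I : Finset (Lr r)) : Set (Vr r) :=
  {v | ∀ α ∈ D.pos, α ∈ ZI I → 0 ≤ pairR (v + toV D.ρ) (D.coroot α) ∧
    pairR (v + toV D.ρ) (D.coroot α) ≤ (D.p : ℝ)}

/-- `S_p`: the reflections of `W_p` in the walls of the fundamental alcove `C`. -/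
def Sp : Set (G r) :=
  {g | g ∈ D.Wp ∧ ∃ α ∈ D.pos, ∃ m : ℤ, D.IsRefl α m g ∧ D.HasWall D.FundC α m}

/-- One step of the order `⪯` (`↑`): `s_{α,mp}·u ⪯ u` whenever `⟨u+ρ,α∨⟩ ≥ mp`. -/
def UpStep (v u : Vr r) : Prop :=
  ∃ α ∈ D.pos, ∃ m : ℤ, (m : ℝ) * (D.p : ℝ) ≤ pairR (u + toV D.ρ) (D.coroot α) ∧
    v = u - (pairR (u + toV D.ρ) (D.coroot α) - (m : ℝ) * (D.p : ℝ)) • toV α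

/-- The order `⪯` (`↑`): the reflexive-transitive closure of `UpStep`. -/
def Up : Vr r → Vr r → Prop := Relation.ReflTransGen D.UpStep

/-- The strict order `≺`. -/
def Ups (v u : Vr r) : Prop := D.Up v u ∧ v ≠ u

/-- The order `≤`: `v ≤ u` iff `u − v` is a `ℤ≥0`-combination of the simple roots. -/
def Le (v u : Vr r) : Prop :=
  ∃ c : Lr r → ℕ, u - v = ∑ α ∈ D.simples, (c α : ℝ) • toV α

/-- The strict order `<`. -/
def Lt (v u : Vr r) : Prop := D.Le v u ∧ v ≠ u

/-- `X₊ = {ν ∈ X : ⟨ν+ρ,α∨⟩ ≥ 0 for all α ∈ Φ⁺}`, viewed inside `X ⊗ ℝ`. -/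
def XplusR : Set (Vr r) :=
  {v | (∃ ν : Lr r, toV ν = v) ∧ ∀ α ∈ D.pos, 0 ≤ pairR (v + toV D.ρ) (D.coroot α)}

/-- `n_α(v)`: the unique integer with `n_α(v)·p < ⟨v+ρ,α∨⟩ < (n_α(v)+1)·p`
(for `v` on none of the hyperplanes), realised as a floor. -/
def nfl (v : Vr r) (α : Lr r) : ℤ := ⌊pairR (v + toV D.ρ) (D.coroot α) / (D.p : ℝ)⌋

/-- `d(v) = ∑_{α ∈ Φ⁺} n_α(v)`. -/
def dfn (v : Vr r) : ℤ := ∑ α ∈ D.pos, D.nfl v α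

/-- The sublattice `pX` of `X`. -/
def pLat : AddSubgroup (Lr r) where
  carrier := {x | ∃ y : Lr r, x = (D.p : ℤ) • y}
  zero_mem' := ⟨0, by simp⟩
  add_mem' := by rintro a b ⟨y, rfl⟩ ⟨z, rfl⟩; exact ⟨y + z, (smul_add _ _ _).symm⟩
  neg_mem' := by rintro a ⟨y, rfl⟩; exact ⟨-y, (smul_neg _ _).symm⟩

/-- The orbit of `ν + pX` under the dot action of `W_I` on `X/pX`. -/
def dotOrbit (I : Finset (Lr r)) (ν : Lr r) : Set (Lr r ⧸ D.pLat) :=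
  {c | ∃ w ∈ D.WI I, ∃ ν' : Lr r, toV ν' = D.dot w (toV ν) ∧
    c = QuotientAddGroup.mk ν'}

end ARDatum

/-!
Write `t = s_{α,mp}`. Then `tv·ν = v·ν − (⟨v(ν+ρ), α∨⟩ − mp)·α`, so `tv·ν ≺ v·ν` holds exactly
when `⟨v(ν+ρ), α∨⟩ > mp`: one step of `⪯` gives "if", and for "only if" note that the form
`B(x, y) = ∑_{c ∈ Φ∨} ⟨x, c⟩⟨y, c⟩` is invariant under every `s_β`, whence
`2 B(x, β) = ⟨x, β∨⟩ B(β, β)`; so `x ↦ B(λ+ρ, x)` is positive on `Φ⁺` and increases along `⪯`.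
It remains to compare `λ` with `μ`: for `w ∈ W_p` the map `x ↦ ⟨w x, α∨⟩` is `x ↦ ⟨x, γ∨⟩ + kp`
for some root `γ`, and `⟨λ+ρ, γ∨⟩` lies in the open interval between the two consecutive multiples
of `p` whose closed interval contains `⟨μ+ρ, γ∨⟩`. Hence `⟨v(λ+ρ), α∨⟩ > mp` as soon as
`⟨v(μ+ρ), α∨⟩ > mp`.
-/

section Pairing

variable {r : ℕ}

lemma pairR_add_left (u v : Vr r) (y : Lr r) : pairR (u + v) y = pairR u y + pairR v y := by
  simp [pairR, add_mul, Finset.sum_add_distrib]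

lemma pairR_sub_left (u v : Vr r) (y : Lr r) : pairR (u - v) y = pairR u y - pairR v y := by
  simp [pairR, sub_mul, Finset.sum_sub_distrib]

lemma pairR_neg_left (v : Vr r) (y : Lr r) : pairR (-v) y = -pairR v y := by
  simp [pairR]

lemma pairR_smul_left (c : ℝ) (v : Vr r) (y : Lr r) : pairR (c • v) y = c * pairR v y := by
  simp [pairR, Finset.mul_sum, mul_assoc]

lemma pairR_sub_zsmul_right (v : Vr r) (y z : Lr r) (k : ℤ) :
    pairR v (y - k • z) = pairR v y - k * pairR v z := by
  simp [pairR, mul_sub, Finset.sum_sub_distrib, Finset.mul_sum, mul_left_comm]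

lemma pairZ_sub_zsmul_right (x y z : Lr r) (k : ℤ) :
    pairZ x (y - k • z) = pairZ x y - k * pairZ x z := by
  simp [pairZ, mul_sub, Finset.sum_sub_distrib, Finset.mul_sum, mul_left_comm]

lemma pairR_toV (x y : Lr r) : pairR (toV x) y = pairZ x y := by
  simp [pairR, pairZ, toV]

lemma toV_neg (x : Lr r) : toV (-x) = -toV x := by
  funext i; simp [toV]

lemma toV_ne_zero {x : Lr r} (hx : x ≠ 0) : toV x ≠ 0 := by
  contrapose! hx
  funext i
  simpa [toV] using congrFun hx i

end Pairing

def SameSideOfMultiples (p b a : ℝ) : Prop :=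
  ∀ n : ℤ, (n * p < b → n * p < a) ∧ (b < n * p → a < n * p)

namespace SameSideOfMultiples

variable {p a b : ℝ}

lemma neg (h : SameSideOfMultiples p b a) : SameSideOfMultiples p (-b) (-a) := by
  intro n
  have := h (-n)
  push_cast at this
  refine ⟨fun hn => ?_, fun hn => ?_⟩
  · linarith [this.2 (by linarith)]
  · linarith [this.1 (by linarith)]

lemma add_int_mul (h : SameSideOfMultiples p b a) (k : ℤ) :
    SameSideOfMultiples p (b + k * p) (a + k * p) := by
  intro n
  have := h (n - k)
  push_cast at this
  refine ⟨fun hn => ?_, fun hn => ?_⟩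
  · linarith [this.1 (by linarith)]
  · linarith [this.2 (by linarith)]

lemma of_mem_Ioo_Icc (ha : a ∈ Set.Ioo 0 p) (hb : b ∈ Set.Icc 0 p) :
    SameSideOfMultiples p b a := by
  obtain ⟨ha0, hap⟩ := ha
  obtain ⟨hb0, hbp⟩ := hb
  have hp : 0 < p := ha0.trans hap
  intro n
  constructor <;> intro hn
  · have : (n : ℝ) < 1 := lt_of_mul_lt_mul_right (by linarith) hp.le
    have : (n : ℝ) ≤ 0 := by exact_mod_cast Int.lt_add_one_iff.mp (by exact_mod_cast this)
    nlinarith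
  · have : (0 : ℝ) < n := pos_of_mul_pos_left (by linarith) hp.le
    have : (1 : ℝ) ≤ n := by exact_mod_cast (by exact_mod_cast this : 0 < n)
    nlinarith

end SameSideOfMultiples

namespace ARDatum

variable {r : ℕ} (D : ARDatum r)

/-- Summing over the set `Φ∨` of coroots rather than over `Φ` makes the index set stable under the
dual reflections even if `coroot` is not injective on `Φ`. -/
def invForm (x y : Vr r) : ℝ := ∑ c ∈ D.Φ.image D.coroot, pairR x c * pairR y c

lemma invForm_reflect {β : Lr r} (hβ : β ∈ D.Φ) (x y : Vr r) :
    D.invForm (x - pairR x (D.coroot β) • toV β) (y - pairR y (D.coroot β) • toV β) =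
      D.invForm x y := by
  set σ : Lr r → Lr r := fun c => c - pairZ β c • D.coroot β
  have hσ_mem : ∀ c ∈ D.Φ.image D.coroot, σ c ∈ D.Φ.image D.coroot := by
    simp only [Finset.mem_image]
    rintro _ ⟨γ, hγ, rfl⟩
    obtain ⟨δ, hδ, e⟩ := D.reflect_coroot_mem β hβ γ hγ
    exact ⟨δ, hδ, e⟩
  have hσσ : ∀ c, σ (σ c) = c := by
    intro c
    simp only [σ, pairZ_sub_zsmul_right, D.root_coroot_two β hβ]
    module
  have hpair : ∀ z : Vr r, ∀ c, pairR (z - pairR z (D.coroot β) • toV β) c = pairR z (σ c) := by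
    intro z c
    rw [pairR_sub_left, pairR_smul_left, pairR_toV, pairR_sub_zsmul_right]
    ring
  simp only [invForm, hpair]
  exact Finset.sum_nbij' σ σ hσ_mem hσ_mem (fun c _ => hσσ c) (fun c _ => hσσ c) (fun _ _ => rfl)

lemma invForm_comm (x y : Vr r) : D.invForm x y = D.invForm y x := by
  simp only [invForm, mul_comm]

lemma invForm_sub_smul_right (x y z : Vr r) (c : ℝ) :
    D.invForm x (y - c • z) = D.invForm x y - c * D.invForm x z := by
  simp only [invForm, pairR_sub_left, pairR_smul_left, Finset.mul_sum, ← Finset.sum_sub_distrib]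
  exact Finset.sum_congr rfl fun _ _ => by ring

lemma invForm_neg_right (x y : Vr r) : D.invForm x (-y) = -D.invForm x y := by
  simp [invForm, pairR_neg_left]

lemma invForm_neg_left (x y : Vr r) : D.invForm (-x) y = -D.invForm x y := by
  simp [invForm, pairR_neg_left]

lemma two_mul_invForm_eq {β : Lr r} (hβ : β ∈ D.Φ) (x : Vr r) :
    2 * D.invForm x (toV β) = pairR x (D.coroot β) * D.invForm (toV β) (toV β) := by
  have hσβ : toV β - pairR (toV β) (D.coroot β) • toV β = -toV β := by
    rw [pairR_toV, D.root_coroot_two β hβ]; module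
  have h := D.invForm_reflect hβ x (toV β)
  rw [hσβ, invForm_neg_right, invForm_comm, invForm_sub_smul_right, invForm_comm] at h
  linarith

lemma invForm_self_pos {β : Lr r} (hβ : β ∈ D.Φ) : 0 < D.invForm (toV β) (toV β) := by
  have hle : pairR (toV β) (D.coroot β) * pairR (toV β) (D.coroot β) ≤
      D.invForm (toV β) (toV β) :=
    Finset.single_le_sum (f := fun c => pairR (toV β) c * pairR (toV β) c)
      (fun _ _ => mul_self_nonneg _) (Finset.mem_image_of_mem _ hβ)
  rw [pairR_toV, D.root_coroot_two β hβ] at hle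
  norm_num at hle
  linarith

/-- The axioms do not give `(-γ)∨ = -γ∨` directly; it follows from `two_mul_invForm_eq` for `γ` and
`-γ`. -/
lemma pairR_coroot_neg {γ : Lr r} (hγ : γ ∈ D.Φ) (x : Vr r) :
    pairR x (D.coroot (-γ)) = -pairR x (D.coroot γ) := by
  have h₁ := D.two_mul_invForm_eq hγ x
  have h₂ := D.two_mul_invForm_eq (D.neg_mem γ hγ) x
  rw [toV_neg, invForm_neg_right, invForm_neg_left, invForm_neg_right, neg_neg] at h₂
  have := D.invForm_self_pos hγ
  nlinarith

section PositiveFunctional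

variable {D} {L : Vr r} (hL : ∀ β ∈ D.pos, 0 < pairR L (D.coroot β))
include hL

lemma invForm_pos_of_mem_pos {β : Lr r} (hβ : β ∈ D.pos) : 0 < D.invForm L (toV β) := by
  have h := D.two_mul_invForm_eq (D.pos_sub hβ) L
  have := mul_pos (hL β hβ) (D.invForm_self_pos (D.pos_sub hβ))
  linarith

lemma invForm_le_of_up {x y : Vr r} (h : D.Up x y) : D.invForm L x ≤ D.invForm L y := by
  induction h with
  | refl => exact le_rfl
  | tail _ hstep ih =>
    obtain ⟨α, hα, m, hle, rfl⟩ := hstep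
    rw [invForm_sub_smul_right] at ih
    nlinarith [invForm_pos_of_mem_pos hL hα]

end PositiveFunctional

lemma dot_add_rho (g : G r) (x : Vr r) : D.dot g x + toV D.ρ = g (x + toV D.ρ) :=
  sub_add_cancel _ _

lemma dot_mul_of_isRefl {α : Lr r} {m : ℤ} {t : G r} (ht : D.IsRefl α m t) (v : G r)
    (x : Vr r) : D.dot (t * v) x =
      D.dot v x - (pairR (v (x + toV D.ρ)) (D.coroot α) - m * D.p) • toV α := by
  change t (v _) - _ = _
  rw [ht, ← D.dot_add_rho v x]
  abel

lemma lt_of_ups_dot_mul {L : Vr r} (hL : ∀ β ∈ D.pos, 0 < pairR L (D.coroot β))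
    {α : Lr r} (hα : α ∈ D.pos) {m : ℤ} {t : G r} (ht : D.IsRefl α m t) {v : G r}
    {x : Vr r} (h : D.Ups (D.dot (t * v) x) (D.dot v x)) :
    m * D.p < pairR (v (x + toV D.ρ)) (D.coroot α) := by
  rw [D.dot_mul_of_isRefl ht] at h
  obtain ⟨hup, hne⟩ := h
  set c := pairR (v (x + toV D.ρ)) (D.coroot α) - m * D.p
  have hc_ne : c ≠ 0 := fun h0 => hne (by rw [h0, zero_smul, sub_zero])
  have hle := invForm_le_of_up hL hup
  rw [invForm_sub_smul_right] at hle
  have hc_nonneg : 0 ≤ c :=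
    le_of_mul_le_mul_right (by linarith) (invForm_pos_of_mem_pos hL hα)
  exact sub_pos.mp (lt_of_le_of_ne hc_nonneg (Ne.symm hc_ne))

lemma ups_dot_mul_of_lt {α : Lr r} (hα : α ∈ D.pos) {m : ℤ} {t : G r} (ht : D.IsRefl α m t)
    {v : G r} {x : Vr r} (h : m * D.p < pairR (v (x + toV D.ρ)) (D.coroot α)) :
    D.Ups (D.dot (t * v) x) (D.dot v x) := by
  rw [D.dot_mul_of_isRefl ht]
  refine ⟨.single ⟨α, hα, m, ?_, ?_⟩, fun heq => ?_⟩
  · rw [dot_add_rho]; exact h.le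
  · rw [dot_add_rho]
  · rcases smul_eq_zero.mp (sub_eq_self.mp heq) with h0 | h0
    · linarith
    · exact toV_ne_zero (D.root_ne_zero α (D.pos_sub hα)) h0

lemma isLinRefl_mul_self {α : Lr r} (hα : α ∈ D.Φ) {g : G r} (hg : D.IsLinRefl α g) :
    g * g = 1 := by
  ext x : 1
  change g (g x) = x
  rw [hg (g x), hg x, pairR_sub_left, pairR_smul_left, pairR_toV, D.root_coroot_two α hα]
  module

lemma isTransl_inv {α : Lr r} {m : ℤ} {g : G r} (hg : D.IsTransl α m g) :
    D.IsTransl α (-m) g⁻¹ := by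
  intro x
  apply g.injective
  change g (g.symm x) = _
  rw [AffineEquiv.apply_symm_apply, hg]
  push_cast
  module

lemma exists_pairR_coroot_eq_of_isLinRefl {α : Lr r} (hα : α ∈ D.Φ) {g : G r}
    (hg : D.IsLinRefl α g) {δ : Lr r} (hδ : δ ∈ D.Φ) :
    ∃ γ ∈ D.Φ, ∀ x, pairR (g x) (D.coroot δ) = pairR x (D.coroot γ) := by
  obtain ⟨γ, hγ, hγδ⟩ := D.reflect_coroot_mem α hα δ hδ
  refine ⟨γ, hγ, fun x => ?_⟩
  rw [hg x, hγδ, pairR_sub_left, pairR_smul_left, pairR_toV, pairR_sub_zsmul_right]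
  push_cast
  ring

lemma pairR_coroot_of_isTransl {α : Lr r} {m : ℤ} {g : G r} (hg : D.IsTransl α m g)
    (δ : Lr r) (x : Vr r) :
    pairR (g x) (D.coroot δ) = pairR x (D.coroot δ) + (m * pairZ α (D.coroot δ) : ℤ) * D.p := by
  rw [hg x, pairR_add_left, pairR_smul_left, pairR_toV]
  push_cast
  ring

lemma exists_pairR_coroot_eq_of_mem_Wp {w : G r} (hw : w ∈ D.Wp) :
    ∀ δ ∈ D.Φ, ∃ γ ∈ D.Φ, ∃ k : ℤ,
      ∀ x, pairR (w x) (D.coroot δ) = pairR x (D.coroot γ) + k * D.p := by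
  induction hw using Subgroup.closure_induction'' with
  | mem g hg =>
    rcases hg with ⟨α, hα, hg⟩ | ⟨α, -, m, hg⟩
    · intro δ hδ
      obtain ⟨γ, hγ, h⟩ := D.exists_pairR_coroot_eq_of_isLinRefl (D.pos_sub hα) hg hδ
      exact ⟨γ, hγ, 0, fun x => by simp [h]⟩
    · exact fun δ hδ => ⟨δ, hδ, _, D.pairR_coroot_of_isTransl hg δ⟩
  | inv_mem g hg =>
    rcases hg with ⟨α, hα, hg⟩ | ⟨α, -, m, hg⟩
    · intro δ hδ
      rw [inv_eq_of_mul_eq_one_right (D.isLinRefl_mul_self (D.pos_sub hα) hg)]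
      obtain ⟨γ, hγ, h⟩ := D.exists_pairR_coroot_eq_of_isLinRefl (D.pos_sub hα) hg hδ
      exact ⟨γ, hγ, 0, fun x => by simp [h]⟩
    · exact fun δ hδ => ⟨δ, hδ, _, D.pairR_coroot_of_isTransl (D.isTransl_inv hg) δ⟩
  | one => exact fun δ hδ => ⟨δ, hδ, 0, fun x => by simp⟩
  | mul v w _ _ hv hw =>
    intro δ hδ
    obtain ⟨γ, hγ, k, hk⟩ := hv δ hδ
    obtain ⟨γ', hγ', k', hk'⟩ := hw γ hγ
    refine ⟨γ', hγ', k + k', fun x => ?_⟩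
    change pairR (v (w x)) _ = _
    rw [hk, hk']
    push_cast
    ring

lemma sameSideOfMultiples_of_mem_Wp {w : G r} (hw : w ∈ D.Wp) {x y : Vr r}
    (hx : x ∈ D.FundC) (hy : y ∈ D.FundCBar) {δ : Lr r} (hδ : δ ∈ D.Φ) :
    SameSideOfMultiples D.p (pairR (w (y + toV D.ρ)) (D.coroot δ))
      (pairR (w (x + toV D.ρ)) (D.coroot δ)) := by
  obtain ⟨γ, hγ, k, hk⟩ := D.exists_pairR_coroot_eq_of_mem_Wp hw δ hδ
  rw [hk, hk]
  refine SameSideOfMultiples.add_int_mul ?_ k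
  rcases D.pos_or_neg γ hγ with hpos | hneg
  · exact .of_mem_Ioo_Icc (hx γ hpos) (hy γ hpos)
  · have h := (SameSideOfMultiples.of_mem_Ioo_Icc (hx (-γ) hneg) (hy (-γ) hneg)).neg
    simpa only [D.pairR_coroot_neg hγ, neg_neg] using h

end ARDatum

theorem stmt5_general {r : ℕ} (D : ARDatum r)
    (lam mu : Lr r) (hlam : toV lam ∈ D.FundC) (hmu : toV mu ∈ D.FundCBar)
    (v : ARDatum.G r) (hv : v ∈ D.Wp)
    (t : ARDatum.G r) (htr : D.IsReflection t)
    (h : D.Ups (D.dot (t * v) (toV mu)) (D.dot v (toV mu))) :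
    D.Ups (D.dot (t * v) (toV lam)) (D.dot v (toV lam)) := by
  obtain ⟨α, hα, m, htα⟩ := htr
  have hmu_lt := D.lt_of_ups_dot_mul (fun β hβ => (hlam β hβ).1) hα htα h
  have hlam_lt := (D.sameSideOfMultiples_of_mem_Wp hv hlam hmu (D.pos_sub hα) m).1 hmu_lt
  exact D.ups_dot_mul_of_lt hα htα hlam_lt

/-- For any reflection `t ∈ W_p`: if `tv·μ ≺ v·μ` then `tv·λ ≺ v·λ`. -/
theorem stmt5 {r : ℕ} (D : ARDatum r)
    (s : ARDatum.G r) (hs : s ∈ D.Sp)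
    (lam mu : Lr r) (hlam : toV lam ∈ D.FundC) (hmu : toV mu ∈ D.FundCBar)
    (hmustab : ∀ g ∈ D.Wp, (D.dot g (toV mu) = toV mu ↔ g = 1 ∨ g = s))
    (hlamstab : ∀ g ∈ D.Wp, D.dot g (toV lam) = toV lam → g = 1)
    (v : ARDatum.G r) (hv : v ∈ D.Wp)
    (t : ARDatum.G r) (ht : t ∈ D.Wp) (htr : D.IsReflection t)
    (h : D.Ups (D.dot (t * v) (toV mu)) (D.dot v (toV mu))) :
    D.Ups (D.dot (t * v) (toV lam)) (D.dot v (toV lam)) :=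
  stmt5_general D lam mu hlam hmu v hv t htr h

end
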